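/- Trace-distance bound between the post-selected average state and the channel-averaged state: with notation as in the non-IID protocol, suppose |R − t̄|/R ≤ δ where δ = 1/(K+1) + √(2x/(R(K+1))), R = (K+1)/(N+1), t̄ = t(Ē|Φ_i) = (1/(N+1))Σ_k t_k, Φ̄_t = (Σ_k T_k Φ_k)/(K+1) and Φ̄_o = (Σ_k t_k Φ_k)/((N+1)·t̄), where Φ_k are density operators and T_k ∈ {0,1} with Σ_k T_k = K+1. If additionally the martingale deviation bound |Σ_k (T_k − t_k)Tr(PΦ_k)| ≤ (N+1)Rδ holds for the optimal projector P, then D(Φ̄_t, Φ̄_o) ≤ 2δ/(1−δ). -/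

import Mathlib

open Matrix Kronecker MeasureTheory ComplexOrder

noncomputable section

def msqrt {α : Type*} [Fintype α] [DecidableEq α] (A : Matrix α α ℂ) : Matrix α α ℂ :=
  open scoped Classical in
  if h : A.PosSemidef then (h.1.eigenvectorUnitary : Matrix α α ℂ) *
    diagonal ((↑) ∘ Real.sqrt ∘ h.1.eigenvalues) * (star h.1.eigenvectorUnitary : Matrix α α ℂ) else 0

def fid {α : Type*} [Fintype α] [DecidableEq α] (ρ σ : Matrix α α ℂ) : ℝ :=
  ((msqrt (msqrt ρ * σ * msqrt ρ)).trace).re ^ 2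

def sineDist {α : Type*} [Fintype α] [DecidableEq α] (ρ σ : Matrix α α ℂ) : ℝ :=
  Real.sqrt (1 - fid ρ σ)

def traceDist {α : Type*} [Fintype α] [DecidableEq α] (ρ σ : Matrix α α ℂ) : ℝ :=
  (1/2) * ((msqrt ((ρ - σ)ᴴ * (ρ - σ))).trace).re

def IsDensity {α : Type*} [Fintype α] (ρ : Matrix α α ℂ) : Prop :=
  ρ.PosSemidef ∧ ρ.trace = 1

def IsPureState {α : Type*} [Fintype α] (ρ : Matrix α α ℂ) : Prop :=
  IsDensity ρ ∧ ∃ ψ : α → ℂ, ρ = Matrix.vecMulVec ψ (star ψ)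

def tr' {α : Type*} [Fintype α] (A : Matrix α α ℂ) : ℝ := A.trace.re

def nstate {α : Type*} [Fintype α] (ρ : Matrix α α ℂ) : Matrix α α ℂ :=
  (((tr' ρ : ℝ) : ℂ))⁻¹ • ρ

def IsCPTD {α β : Type*} [Fintype α] [Fintype β] [DecidableEq α] [DecidableEq β]
    (E : Matrix α α ℂ →ₗ[ℂ] Matrix β β ℂ) : Prop :=
  ∃ (k : ℕ) (K : Fin k → Matrix β α ℂ),
    (∀ ρ, E ρ = ∑ i, K i * ρ * (K i)ᴴ) ∧ (1 - ∑ i, (K i)ᴴ * K i).PosSemidef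

def IsCPTP {α β : Type*} [Fintype α] [Fintype β] [DecidableEq α] [DecidableEq β]
    (E : Matrix α α ℂ →ₗ[ℂ] Matrix β β ℂ) : Prop :=
  ∃ (k : ℕ) (K : Fin k → Matrix β α ℂ),
    (∀ ρ, E ρ = ∑ i, K i * ρ * (K i)ᴴ) ∧ (∑ i, (K i)ᴴ * K i = 1)

def tensId {α β γ : Type*} [Fintype α]
    (E : Matrix α α ℂ → Matrix β β ℂ)
    (ρ : Matrix (α × γ) (α × γ) ℂ) : Matrix (β × γ) (β × γ) ℂ :=
  Matrix.of fun p q => E (Matrix.of fun a b => ρ (a, p.2) (b, q.2)) p.1 q.1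

def maxEnt (d : ℕ) : Matrix (Fin d × Fin d) (Fin d × Fin d) ℂ :=
  Matrix.of fun p q => if p.1 = p.2 ∧ q.1 = q.2 then ((d : ℂ))⁻¹ else 0

def ptraceSnd {α β : Type*} [Fintype β] (ρ : Matrix (α × β) (α × β) ℂ) : Matrix α α ℂ :=
  Matrix.of fun a b => ∑ j, ρ (a, j) (b, j)

def ptraceFst {α β : Type*} [Fintype α] (ρ : Matrix (α × β) (α × β) ℂ) : Matrix β β ℂ :=
  Matrix.of fun i j => ∑ a, ρ (a, i) (a, j)

def choiSine {m n : ℕ} (E₁ E₂ : Matrix (Fin m) (Fin m) ℂ →ₗ[ℂ] Matrix (Fin n) (Fin n) ℂ) : ℝ :=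
  sineDist (nstate (tensId (⇑E₁) (maxEnt m))) (nstate (tensId (⇑E₂) (maxEnt m)))

def diamondSine {m n : ℕ} (E₁ E₂ : Matrix (Fin m) (Fin m) ℂ →ₗ[ℂ] Matrix (Fin n) (Fin n) ℂ) : ℝ :=
  sSup { x | ∃ ρ : Matrix (Fin m × Fin m) (Fin m × Fin m) ℂ, IsPureState ρ ∧
    tr' (tensId (⇑E₁) ρ) ≠ 0 ∧ tr' (tensId (⇑E₂) ρ) ≠ 0 ∧
    x = sineDist (nstate (tensId (⇑E₁) ρ)) (nstate (tensId (⇑E₂) ρ)) }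

/-! The trace distance of two states of equal trace is attained by the projector `P` onto the
nonnegative eigenspace of their difference, obtained here from the continuous functional calculus
(any function is continuous on the finite spectrum of a matrix). For this `P` the numbers
`c k = Tr (P Φ k)` lie in `[0, 1]`, and
`D(Φ̄_t, Φ̄_o) = (∑ T k c k) / (K + 1) - (∑ t k c k) / ((N + 1) t̄)` splits into the martingale
term `(∑ (T k - t k) c k) / (K + 1) ≤ δ` and
`(1 / (K + 1) - 1 / ((N + 1) t̄)) ∑ t k c k ≤ |(N + 1) t̄ - (K + 1)| / (K + 1) ≤ δ`, where the last
step is the concentration hypothesis `|R - t̄| / R ≤ δ` scaled by `N + 1`. Hence `D ≤ 2δ ≤ 2δ / (1 - δ)`. -/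

open scoped MatrixOrder

section Projection

variable {m : Type*} [Fintype m]

lemma re_trace_projection_mul_nonneg {P ρ : Matrix m m ℂ} (hPH : Pᴴ = P) (hPP : P * P = P)
    (hρ : ρ.PosSemidef) : 0 ≤ ((P * ρ).trace).re := by
  have h : (P * ρ).trace = (Pᴴ * ρ * P).trace := by
    rw [hPH, trace_mul_cycle, hPP]
  rw [h]
  exact Complex.nonneg_iff.mp (hρ.conjTranspose_mul_mul_same P).trace_nonneg |>.1

variable [DecidableEq m]

lemma re_trace_projection_mul_le_one {P ρ : Matrix m m ℂ} (hPH : Pᴴ = P) (hPP : P * P = P)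
    (hρ : IsDensity ρ) : ((P * ρ).trace).re ≤ 1 := by
  have h := re_trace_projection_mul_nonneg (P := 1 - P) (by simp [hPH])
    (by simp [sub_mul, mul_sub, hPP]) hρ.1
  rw [sub_mul, one_mul, trace_sub, hρ.2, Complex.sub_re, Complex.one_re] at h
  linarith

lemma msqrt_eq_sqrt {A : Matrix m m ℂ} (hA : A.PosSemidef) : msqrt A = CFC.sqrt A := by
  rw [msqrt, dif_pos hA, CFC.sqrt_eq_real_sqrt A hA.nonneg, cfcₙ_eq_cfc, hA.1.cfc_eq]
  rfl

lemma msqrt_conjTranspose_mul_self {Δ : Matrix m m ℂ} (hΔ : Δ.IsHermitian) :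
    msqrt (Δᴴ * Δ) = cfc (fun x : ℝ => |x|) Δ := by
  rw [msqrt_eq_sqrt (posSemidef_conjTranspose_mul_self Δ), ← Matrix.star_eq_conjTranspose Δ,
    ← CFC.abs, CFC.abs_eq_cfc_norm Δ hΔ.isSelfAdjoint]
  rfl

theorem exists_projection_traceDist_eq (ρ σ : Matrix m m ℂ) (hH : (ρ - σ).IsHermitian)
    (htr : ρ.trace = σ.trace) :
    ∃ P : Matrix m m ℂ, Pᴴ = P ∧ P * P = P ∧ traceDist ρ σ = ((P * (ρ - σ)).trace).re := by
  set Δ := ρ - σ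
  have hcont (g : ℝ → ℝ) : ContinuousOn g (spectrum ℝ Δ) := Δ.finite_real_spectrum.continuousOn g
  set f : ℝ → ℝ := fun x => if 0 ≤ x then 1 else 0
  refine ⟨cfc f Δ, (cfc_predicate f Δ).star_eq, ?_, ?_⟩
  · rw [← cfc_mul f f Δ (hcont f) (hcont f)]
    exact cfc_congr fun x _ => by by_cases hx : 0 ≤ x <;> simp [f, hx]
  · have habs : cfc (fun x : ℝ => |x|) Δ = (2 : ℝ) • (cfc f Δ * Δ) - Δ := calc
      cfc (fun x : ℝ => |x|) Δ = cfc (fun x => 2 * (f x * x) - x) Δ :=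
        cfc_congr fun x _ => by
          by_cases hx : 0 ≤ x
          · simp [f, hx, abs_of_nonneg hx]; ring
          · simp [f, hx, abs_of_neg (not_le.mp hx)]
      _ = (2 : ℝ) • (cfc f Δ * Δ) - Δ := by
        rw [cfc_sub _ _ Δ (hcont _) (hcont _), cfc_const_mul _ _ Δ (hcont _),
          cfc_mul _ _ Δ (hcont _) (hcont _), cfc_id' ℝ Δ]
    have hΔ : Δ.trace = 0 := by simp [Δ, htr]
    rw [traceDist, msqrt_conjTranspose_mul_self hH, habs, trace_sub, trace_smul, hΔ]
    simp

end Projection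

section Mixture

variable {ι m : Type*} [Fintype ι] (a : ℝ) (w : ι → ℝ) (Φ : ι → Matrix m m ℂ)

lemma isHermitian_inv_smul_sum (hΦ : ∀ k, (Φ k).IsHermitian) :
    ((a : ℂ)⁻¹ • ∑ k, (w k : ℂ) • Φ k).IsHermitian := by
  simp only [IsHermitian, conjTranspose_smul, conjTranspose_sum, (hΦ _).eq, Complex.star_def,
    map_inv₀, Complex.conj_ofReal]

variable [Fintype m]

lemma trace_inv_smul_sum (hΦ : ∀ k, (Φ k).trace = 1) :
    ((a : ℂ)⁻¹ • ∑ k, (w k : ℂ) • Φ k).trace = ((a⁻¹ * ∑ k, w k : ℝ) : ℂ) := by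
  simp [trace_sum, trace_smul, hΦ]

lemma re_trace_mul_inv_smul_sum (P : Matrix m m ℂ) :
    ((P * ((a : ℂ)⁻¹ • ∑ k, (w k : ℂ) • Φ k)).trace).re
      = a⁻¹ * ∑ k, w k * ((P * Φ k).trace).re := by
  simp [Matrix.mul_sum, trace_sum, trace_smul, Complex.re_sum, ← Complex.ofReal_inv]

end Mixture

lemma inv_mul_sub_inv_mul_le {a b u s δ : ℝ} (ha : 0 < a) (hb : 0 < b) (hu : |u - s| ≤ δ * a)
    (hs₀ : 0 ≤ s) (hsb : s ≤ b) (hab : |a - b| ≤ δ * a) :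
    a⁻¹ * u - b⁻¹ * s ≤ 2 * δ := by
  have h₁ : a⁻¹ * (u - s) ≤ δ := by
    rw [← div_eq_inv_mul, div_le_iff₀ ha]; linarith [le_abs_self (u - s)]
  have h₂ : s * (a⁻¹ - b⁻¹) ≤ δ := by
    have : s * (a⁻¹ - b⁻¹) = s / b * ((b - a) / a) := by field_simp
    rw [this]
    calc s / b * ((b - a) / a) ≤ s / b * (|a - b| / a) := by
          gcongr; rw [abs_sub_comm]; exact le_abs_self _
      _ ≤ 1 * (|a - b| / a) := by gcongr; exact div_le_one_of_le₀ hsb hb.le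
      _ ≤ δ := by rw [one_mul, div_le_iff₀ ha]; exact hab
  linarith [show a⁻¹ * u - b⁻¹ * s = a⁻¹ * (u - s) + s * (a⁻¹ - b⁻¹) by ring]

theorem postselected_average_state_bound_general {n N K : ℕ}
    (R δ tbar : ℝ)
    (T t : Fin (N + 1) → ℝ)
    (hTsum : ∑ k, T k = K + 1)
    (ht : ∀ k, 0 ≤ t k ∧ t k ≤ 1)
    (hR : R = (K + 1) / (N + 1)) (htbar : tbar = (∑ k, t k) / (N + 1))
    (htpos : 0 < tbar)
    (hδ1 : δ < 1)
    (hdev : |R - tbar| / R ≤ δ)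
    (Φ : Fin (N + 1) → Matrix (Fin n) (Fin n) ℂ) (hΦ : ∀ k, IsDensity (Φ k))
    (Φt Φo : Matrix (Fin n) (Fin n) ℂ)
    (hΦt : Φt = (((K + 1 : ℝ)) : ℂ)⁻¹ • ∑ k, ((T k : ℝ) : ℂ) • Φ k)
    (hΦo : Φo = ((((N + 1 : ℝ) * tbar)) : ℂ)⁻¹ • ∑ k, ((t k : ℝ) : ℂ) • Φ k)
    (hP : ∀ P : Matrix (Fin n) (Fin n) ℂ, Pᴴ = P → P * P = P →
      traceDist Φt Φo = ((P * (Φt - Φo)).trace).re →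
      |∑ k, (T k - t k) * ((P * Φ k).trace).re| ≤ (N + 1) * R * δ) :
    traceDist Φt Φo ≤ 2 * δ / (1 - δ) := by
  rw [← Complex.ofReal_mul] at hΦo
  have hK : (0 : ℝ) < K + 1 := by positivity
  have hM : (0 : ℝ) < (N + 1) * tbar := by positivity
  have hR₀ : 0 < R := by rw [hR]; positivity
  have hNR : ((N : ℝ) + 1) * R = K + 1 := by rw [hR]; field_simp
  have hsum_t : ∑ k, t k = (N + 1) * tbar := by rw [htbar]; field_simp
  have hherm : (Φt - Φo).IsHermitian := by
    rw [hΦt, hΦo]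
    exact (isHermitian_inv_smul_sum _ T Φ fun k => (hΦ k).1.1).sub
      (isHermitian_inv_smul_sum _ t Φ fun k => (hΦ k).1.1)
  have htr : Φt.trace = Φo.trace := by
    rw [hΦt, hΦo, trace_inv_smul_sum _ T Φ fun k => (hΦ k).2,
      trace_inv_smul_sum _ t Φ fun k => (hΦ k).2, hTsum, hsum_t, inv_mul_cancel₀ hK.ne',
      inv_mul_cancel₀ hM.ne']
  obtain ⟨P, hPH, hPP, hD⟩ := exists_projection_traceDist_eq Φt Φo hherm htr
  have hmart : |∑ k, T k * ((P * Φ k).trace).re - ∑ k, t k * ((P * Φ k).trace).re|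
      ≤ δ * (K + 1) := by
    rw [← Finset.sum_sub_distrib, ← hNR, mul_comm δ]
    simpa only [sub_mul] using hP P hPH hPP hD
  have hconc : |(K + 1 : ℝ) - (N + 1) * tbar| ≤ δ * (K + 1) := by
    rw [← hNR, ← mul_sub, abs_mul, abs_of_pos (by positivity : (0 : ℝ) < N + 1)]
    rw [mul_left_comm]
    gcongr
    exact (div_le_iff₀ hR₀).mp hdev
  have hδ₀ : 0 ≤ δ := (div_nonneg (abs_nonneg _) hR₀.le).trans hdev
  rw [hD, Matrix.mul_sub, trace_sub, Complex.sub_re, hΦt, hΦo, re_trace_mul_inv_smul_sum,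
    re_trace_mul_inv_smul_sum]
  refine (inv_mul_sub_inv_mul_le hK hM hmart ?_ ?_ hconc).trans
    (le_div_self (by positivity) (by linarith) (by linarith))
  · exact Finset.sum_nonneg fun k _ =>
      mul_nonneg (ht k).1 (re_trace_projection_mul_nonneg hPH hPP (hΦ k).1)
  · rw [← hsum_t]
    exact Finset.sum_le_sum fun k _ =>
      mul_le_of_le_one_right (ht k).1 (re_trace_projection_mul_le_one hPH hPP (hΦ k))

/-- Trace-distance bound between the post-selected average state and the
channel-averaged state (key algebraic step of Proposition 2 of the paper). -/
theorem postselected_average_state_bound {n N K : ℕ}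
    (x R δ tbar : ℝ)
    (T t : Fin (N + 1) → ℝ)
    (hT01 : ∀ k, T k = 0 ∨ T k = 1) (hTsum : ∑ k, T k = K + 1)
    (ht : ∀ k, 0 ≤ t k ∧ t k ≤ 1)
    (hR : R = (K + 1) / (N + 1)) (htbar : tbar = (∑ k, t k) / (N + 1))
    (htpos : 0 < tbar)
    (hδ : δ = 1 / (K + 1) + Real.sqrt (2 * x / (R * (K + 1)))) (hδ1 : δ < 1)
    (hdev : |R - tbar| / R ≤ δ)
    (Φ : Fin (N + 1) → Matrix (Fin n) (Fin n) ℂ) (hΦ : ∀ k, IsDensity (Φ k))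
    (Φt Φo : Matrix (Fin n) (Fin n) ℂ)
    (hΦt : Φt = (((K + 1 : ℝ)) : ℂ)⁻¹ • ∑ k, ((T k : ℝ) : ℂ) • Φ k)
    (hΦo : Φo = ((((N + 1 : ℝ) * tbar)) : ℂ)⁻¹ • ∑ k, ((t k : ℝ) : ℂ) • Φ k)
    (hP : ∀ P : Matrix (Fin n) (Fin n) ℂ, Pᴴ = P → P * P = P →
      traceDist Φt Φo = ((P * (Φt - Φo)).trace).re →
      |∑ k, (T k - t k) * ((P * Φ k).trace).re| ≤ (N + 1) * R * δ) :
    traceDist Φt Φo ≤ 2 * δ / (1 - δ) :=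
  postselected_average_state_bound_general R δ tbar T t hTsum ht hR htbar htpos hδ1 hdev Φ hΦ Φt Φo
    hΦt hΦo hP
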